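/- arXiv:2512.00610 — 5 statements merged into one kernel-verified Lean document; each statement's English description precedes it below -/
import Mathlib

section
/- Fix n ≥ 2, p ≥ 1 and 1 ≤ t ≤ 2np. Let A_t be the set of normalized vertex alignment matrices A = A(π) (with representative π minimizing the number of mismatches with π* = (id,…,id)) such that ‖A^* − A^*A‖₁ ∈ [(t−1)/2, t/2]. Then |A_t| ≤ binom(np, t ∧ np) · n^{t ∧ np}. -/
open Finset

/-- The normalized vertex alignment matrix `A(π)` of a `p`-tuple of permutations. -/
noncomputable def Amat {n p : ℕ} (π : Fin p → Equiv.Perm (Fin n)) :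
    Matrix (Fin p × Fin n) (Fin p × Fin n) ℝ :=
  fun x y => (p : ℝ)⁻¹ * (if π x.1 x.2 = π y.1 y.2 then 1 else 0)

/-- Entrywise ℓ¹ norm of a matrix. -/
noncomputable def l1Norm {ι κ : Type*} [Fintype ι] [Fintype κ]
    (M : Matrix ι κ ℝ) : ℝ := ∑ i, ∑ j, |M i j|

/-!
Relabelling all layers by one permutation `σ` does not change `A(π)`, so `A(π)` is determined by
the labelling `(j, v) ↦ σ (π j v)`. Column by column one computes
`‖A* - A* A(π)‖₁ = (2/p) ∑_{v,j} #{i | π i v ≠ π j v}`. Let `σ⁻¹ v` be the strict majority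
label of column `v` whenever there is one: two columns never share a strict majority, so this
extends to a permutation, and then the labelling differs from `(j, v) ↦ v` in at most
`‖A* - A* A(π)‖₁ ≤ t / 2` places. The labellings within Hamming distance `m = min t (np)` of
`(j, v) ↦ v` number at most `binom(np, m) n^m`.
-/

section Hamming

variable {ι β : Type*} [Fintype ι] [DecidableEq β]

theorem card_le_hammingDist_add_hammingDist {x y : ι → β} (z : ι → β) (h : ∀ i, x i ≠ y i) :
    Fintype.card ι ≤ hammingDist x z + hammingDist z y := by
  have hxy : hammingDist x y = Fintype.card ι := by simp [hammingDist, h]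
  exact hxy ▸ hammingDist_triangle x z y

theorem hammingDist_prod_eq_sum {κ : Type*} [Fintype κ] (x y : ι × κ → β) :
    hammingDist x y = ∑ k, hammingDist (fun i => x (i, k)) (fun i => y (i, k)) := by
  simp only [hammingDist, card_filter]
  rw [Fintype.sum_prod_type, sum_comm]

theorem card_hammingBall_le [DecidableEq ι] [Fintype β] (f₀ : ι → β) {m : ℕ}
    (hm : m ≤ Fintype.card ι) :
    #{f : ι → β | hammingDist f f₀ ≤ m} ≤ (Fintype.card ι).choose m * Fintype.card β ^ m := by
  let patches := (powersetCard m (univ : Finset ι)).sigma fun S =>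
    S.pi fun _ => (univ : Finset β)
  let patch : (Σ S : Finset ι, ∀ i ∈ S, β) → ι → β := fun g i =>
    if hi : i ∈ g.1 then g.2 i hi else f₀ i
  calc #{f : ι → β | hammingDist f f₀ ≤ m}
      ≤ #(patches.image patch) := by
        refine card_le_card fun f hf => ?_
        obtain ⟨S, hDS, hS⟩ := exists_superset_card_eq (mem_filter.1 hf).2 (by simpa using hm)
        refine mem_image.2 ⟨⟨S, fun i _ => f i⟩, by simp [patches, hS], funext fun i => ?_⟩
        by_cases hi : i ∈ S
        · simp [patch, hi]
        · have : f i = f₀ i := by simpa using mt (@hDS i) hi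
          simp [patch, hi, this]
    _ ≤ #patches := card_image_le
    _ = (Fintype.card ι).choose m * Fintype.card β ^ m := by
        rw [card_sigma, sum_congr rfl fun S hS => by rw [card_pi, prod_const, card_univ,
          (mem_powersetCard.1 hS).2], sum_const, card_powersetCard, card_univ, smul_eq_mul]

theorem mul_hammingDist_const_le_sum (f : ι → β) {b : β}
    (hb : 2 * hammingDist f (fun _ => b) < Fintype.card ι) :
    Fintype.card ι * hammingDist f (fun _ => b) ≤ ∑ i, hammingDist f (fun _ => f i) := by
  have hmin : ∀ i, hammingDist f (fun _ => b) ≤ hammingDist f (fun _ => f i) := fun i => by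
    by_cases hi : f i = b
    · rw [hi]
    · have := card_le_hammingDist_add_hammingDist f (x := fun _ => f i) (y := fun _ => b)
        fun _ => hi
      rw [hammingDist_comm _ f] at this
      omega
  simpa using sum_le_sum fun i (_ : i ∈ univ) => hmin i

theorem mul_hammingDist_const_le_two_mul_sum (f : ι → β) {b : β}
    (hb : 2 * hammingDist f (fun _ => b) < Fintype.card ι ∨
      ∀ b', Fintype.card ι ≤ 2 * hammingDist f (fun _ => b')) :
    Fintype.card ι * hammingDist f (fun _ => b) ≤ 2 * ∑ i, hammingDist f (fun _ => f i) := by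
  rcases hb with hb | hb
  · exact (mul_hammingDist_const_le_sum f hb).trans (Nat.le_mul_of_pos_left _ two_pos)
  · calc Fintype.card ι * hammingDist f (fun _ => b)
        ≤ Fintype.card ι * Fintype.card ι := Nat.mul_le_mul_left _ hammingDist_le_card_fintype
      _ ≤ 2 * ∑ i, hammingDist f (fun _ => f i) := by
        simpa [mul_sum] using sum_le_sum fun i (_ : i ∈ univ) => hb (f i)

end Hamming

def coincidenceMatrix {ι β : Type*} [DecidableEq β] (g : ι → β) : Matrix ι ι ℝ :=
  Matrix.of fun x y => if g x = g y then 1 else 0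

theorem coincidenceMatrix_comp {ι β γ : Type*} [DecidableEq β] [DecidableEq γ] {e : β → γ}
    (he : Function.Injective e) (g : ι → β) :
    coincidenceMatrix (fun x => e (g x)) = coincidenceMatrix g := by
  ext
  simp [coincidenceMatrix, he.eq_iff]

section Alignment

variable {n p : ℕ}

theorem Amat_eq_smul_coincidenceMatrix (π : Fin p → Equiv.Perm (Fin n)) :
    Amat π = (p : ℝ)⁻¹ • coincidenceMatrix fun x : Fin p × Fin n => π x.1 x.2 := by
  ext
  simp [Amat, coincidenceMatrix]

theorem Amat_one_apply (x y : Fin p × Fin n) :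
    Amat (fun _ => (1 : Equiv.Perm (Fin n))) x y = (p : ℝ)⁻¹ * if x.2 = y.2 then 1 else 0 :=
  rfl

theorem Amat_one_mul_Amat_apply (π : Fin p → Equiv.Perm (Fin n)) (x y : Fin p × Fin n) :
    (Amat (fun _ => 1) * Amat π : Matrix (Fin p × Fin n) _ ℝ) x y =
      (p : ℝ)⁻¹ ^ 2 * #{j | π j x.2 = π y.1 y.2} := by
  rw [Matrix.mul_apply, Fintype.sum_prod_type]
  simp only [Amat_one_apply, mul_ite, mul_one, mul_zero, ite_mul, zero_mul, sum_ite_eq,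
    mem_univ, if_true]
  simp [Amat, ← sum_filter, sq, mul_comm]

theorem sum_card_apply_eq (π : Fin p → Equiv.Perm (Fin n)) (b : Fin n) :
    ∑ u, #{j | π j u = b} = p := by
  simp_rw [card_filter, ← Equiv.eq_symm_apply]
  rw [sum_comm]
  simp

theorem card_apply_eq_add_hammingDist (π : Fin p → Equiv.Perm (Fin n)) (u b : Fin n) :
    #{j | π j u = b} + hammingDist (fun j => π j u) (fun _ => b) = p := by
  simpa [hammingDist] using card_filter_add_card_filter_not (s := univ) (fun j => π j u = b)

theorem sum_abs_sub_Amat_one_mul_Amat_apply (π : Fin p → Equiv.Perm (Fin n))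
    (y : Fin p × Fin n) :
    ∑ x, |(Amat (fun _ => 1) - Amat (fun _ => 1) * Amat π : Matrix (Fin p × Fin n) _ ℝ) x y| =
      2 / p * hammingDist (fun j => π j y.2) (fun _ => π y.1 y.2) := by
  have hp : (p : ℝ) ≠ 0 := Nat.cast_ne_zero.2 (Fin.pos y.1).ne'
  set c : Fin n → ℝ := fun u => #{j | π j u = π y.1 y.2} with hc
  have hd : c y.2 + hammingDist (fun j => π j y.2) (fun _ => π y.1 y.2) = p := by
    simp only [hc]
    exact_mod_cast card_apply_eq_add_hammingDist π y.2 (π y.1 y.2)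
  have hc_le : c y.2 ≤ p := by
    linarith [(hammingDist (fun j => π j y.2) fun _ => π y.1 y.2).cast_nonneg (α := ℝ)]
  have hsum_c : ∑ u, c u = p := by
    simp only [hc]
    exact_mod_cast sum_card_apply_eq π (π y.1 y.2)
  -- `|δ - c / p| = δ (1 - 2 c / p) + c / p` for `δ ∈ {0, 1}` and `0 ≤ c ≤ p`
  have hentry : ∀ x : Fin p × Fin n,
      |(Amat (fun _ => 1) - Amat (fun _ => 1) * Amat π : Matrix (Fin p × Fin n) _ ℝ) x y| =
        (p : ℝ)⁻¹ * ((if x.2 = y.2 then 1 - 2 * c y.2 / p else 0) + c x.2 / p) := fun x => by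
    rw [Matrix.sub_apply, Amat_one_mul_Amat_apply, Amat_one_apply]
    by_cases hx : x.2 = y.2
    · have : 0 ≤ (p : ℝ)⁻¹ - (p : ℝ)⁻¹ ^ 2 * c y.2 := by
        rw [sq, mul_assoc, ← mul_one_sub]
        exact mul_nonneg (by positivity)
          (sub_nonneg.2 ((inv_mul_le_one₀ (by positivity)).2 hc_le))
      simp only [hx, if_true, mul_one]
      rw [abs_of_nonneg this]
      field_simp
      ring
    · simp only [hx, if_false, mul_zero, zero_sub, abs_neg, zero_add]
      rw [abs_of_nonneg (by positivity)]
      field_simp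
      rfl
  simp only [hentry, Fintype.sum_prod_type, sum_const, card_univ, Fintype.card_fin, nsmul_eq_mul,
    ← mul_sum, sum_add_distrib, sum_ite_eq', mem_univ, if_true, ← sum_div, hsum_c]
  field_simp
  linarith

theorem l1Norm_sub_Amat_one_mul_Amat (π : Fin p → Equiv.Perm (Fin n)) :
    l1Norm (Amat (fun _ => 1) - Amat (fun _ => 1) * Amat π) =
      2 / p * ∑ v, ∑ j, (hammingDist (fun i => π i v) (fun _ => π j v) : ℝ) := by
  rw [l1Norm, sum_comm]
  simp only [sum_abs_sub_Amat_one_mul_Amat_apply]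
  rw [← mul_sum, Fintype.sum_prod_type, sum_comm]

theorem exists_perm_mul_hammingDist_le (π : Fin p → Equiv.Perm (Fin n)) :
    ∃ w : Equiv.Perm (Fin n), ∀ v, p * hammingDist (fun j => π j v) (fun _ => w v) ≤
      2 * ∑ j, hammingDist (fun i => π i v) (fun _ => π j v) := by
  classical
  let s : Set (Fin n) := {v | ∃ b, 2 * hammingDist (fun j => π j v) (fun _ => b) < p}
  let majority (v : Fin n) : Fin n := if h : v ∈ s then h.choose else v
  have hmajority : ∀ v ∈ s, 2 * hammingDist (fun j => π j v) (fun _ => majority v) < p :=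
    fun v hv => by simpa [majority, hv] using hv.choose_spec
  have hinj : Set.InjOn majority s := fun v hv v' hv' heq => by
    by_contra hne
    have hsplit := card_le_hammingDist_add_hammingDist (fun _ => majority v)
      (x := fun j => π j v) (y := fun j => π j v') fun j => (π j).injective.ne hne
    have hv'maj := hmajority v' hv'
    rw [hammingDist_comm, ← heq] at hv'maj
    simp only [Fintype.card_fin] at hsplit
    have := hmajority v hv
    omega
  obtain ⟨g, hg⟩ := Set.MapsTo.exists_equiv_extend_of_card_eq (t := univ) (by simp)
    (fun v _ => mem_coe.2 (mem_univ (majority v))) hinj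
  refine ⟨g.trans (Equiv.subtypeUnivEquiv mem_univ), fun v => ?_⟩
  simpa using mul_hammingDist_const_le_two_mul_sum (fun j => π j v) (b := g v) <| by
    by_cases hv : v ∈ s
    · exact Or.inl (by simpa [hg v hv] using hmajority v hv)
    · exact Or.inr (by simpa [s] using hv)

theorem exists_perm_hammingDist_le_l1Norm (π : Fin p → Equiv.Perm (Fin n)) :
    ∃ σ : Equiv.Perm (Fin n),
      (hammingDist (fun x : Fin p × Fin n => σ (π x.1 x.2)) Prod.snd : ℝ) ≤
        l1Norm (Amat (fun _ => 1) - Amat (fun _ => 1) * Amat π) := by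
  obtain ⟨w, hw⟩ := exists_perm_mul_hammingDist_le π
  refine ⟨w.symm, ?_⟩
  have hdist : hammingDist (fun x : Fin p × Fin n => w.symm (π x.1 x.2)) Prod.snd =
      ∑ v, hammingDist (fun j => π j v) (fun _ => w v) := by
    rw [← hammingDist_comp (fun _ => w) fun _ => w.injective]
    simp only [Equiv.apply_symm_apply]
    exact hammingDist_prod_eq_sum _ _
  rcases p.eq_zero_or_pos with rfl | hp
  · simp [l1Norm, hammingDist]
  · have hsum : p * ∑ v, hammingDist (fun j => π j v) (fun _ => w v) ≤
        2 * ∑ v, ∑ j, hammingDist (fun i => π i v) (fun _ => π j v) := by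
      rw [mul_sum, mul_sum]
      exact sum_le_sum fun v _ => hw v
    rw [hdist, l1Norm_sub_Amat_one_mul_Amat, div_mul_eq_mul_div, le_div_iff₀ (by positivity),
      mul_comm]
    exact_mod_cast hsum

end Alignment

theorem card_At_le_general
    (n p t : ℕ) :
    Set.ncard {A : Matrix (Fin p × Fin n) (Fin p × Fin n) ℝ |
        ∃ π : Fin p → Equiv.Perm (Fin n), A = Amat π ∧
          ((t : ℝ) - 1) / 2 ≤ l1Norm (Amat (fun _ => 1) - Amat (fun _ => 1) * Amat π) ∧
          l1Norm (Amat (fun _ => 1) - Amat (fun _ => 1) * Amat π) ≤ (t : ℝ) / 2} ≤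
      (n * p).choose (min t (n * p)) * n ^ (min t (n * p)) := by
  set m := min t (n * p)
  have hm : m ≤ Fintype.card (Fin p × Fin n) := by simp [m, mul_comm]
  let ball : Finset (Fin p × Fin n → Fin n) := {g | hammingDist g Prod.snd ≤ m}
  let toMatrix (g : Fin p × Fin n → Fin n) := (p : ℝ)⁻¹ • coincidenceMatrix g
  refine (Set.ncard_le_ncard (t := ball.image toMatrix) ?_ (finite_toSet _)).trans ?_
  · rintro _ ⟨π, rfl, -, hπ⟩
    obtain ⟨σ, hσ⟩ := exists_perm_hammingDist_le_l1Norm π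
    have ht : hammingDist (fun x : Fin p × Fin n => σ (π x.1 x.2)) Prod.snd ≤ t :=
      (Nat.cast_le (α := ℝ)).1 (by linarith [t.cast_nonneg (α := ℝ)])
    have hnp : hammingDist (fun x : Fin p × Fin n => σ (π x.1 x.2)) Prod.snd ≤ n * p :=
      hammingDist_le_card_fintype.trans (by simp [mul_comm])
    refine mem_image.2 ⟨_, mem_filter.2 ⟨mem_univ _, le_min ht hnp⟩, ?_⟩
    rw [Amat_eq_smul_coincidenceMatrix, ← coincidenceMatrix_comp σ.injective]
  · rw [Set.ncard_coe_finset]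
    calc #(ball.image toMatrix) ≤ #ball := card_image_le
      _ ≤ (n * p).choose m * n ^ m := by
        simpa [mul_comm] using card_hammingBall_le Prod.snd hm

theorem card_At_le
    (n p t : ℕ) (hn : 2 ≤ n) (hp : 1 ≤ p) (ht : 1 ≤ t) (ht2 : t ≤ 2 * n * p) :
    Set.ncard {A : Matrix (Fin p × Fin n) (Fin p × Fin n) ℝ |
        ∃ π : Fin p → Equiv.Perm (Fin n), A = Amat π ∧
          ((t : ℝ) - 1) / 2 ≤ l1Norm (Amat (fun _ => 1) - Amat (fun _ => 1) * Amat π) ∧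
          l1Norm (Amat (fun _ => 1) - Amat (fun _ => 1) * Amat π) ≤ (t : ℝ) / 2} ≤
      (n * p).choose (min t (n * p)) * n ^ (min t (n * p)) :=
  card_At_le_general n p t
end

section
/- For any integer n ≥ 4 there exists a set A ⊆ S_n of permutations such that |A| ≥ (n/24)^{n/6} and for every distinct π, π' ∈ A, the normalized Hamming distance d_H(π,π') = (1/n)·|{u : π(u) ≠ π'(u)}| is at least 3/8. -/
open Finset Nat

/-- Normalized Hamming distance between two permutations of `Fin n`. -/
noncomputable def permHammingDist (n : ℕ) (π π' : Equiv.Perm (Fin n)) : ℝ :=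
  (n : ℝ)⁻¹ * (Finset.univ.filter (fun u => π u ≠ π' u)).card

/-- Number of positions where two permutations disagree. -/
def permDisagree (n : ℕ) (π π' : Equiv.Perm (Fin n)) : ℕ :=
  (Finset.univ.filter (fun u => π u ≠ π' u)).card

lemma permDisagree_comm (n : ℕ) (π π' : Equiv.Perm (Fin n)) :
    permDisagree n π π' = permDisagree n π' π := by
  unfold permDisagree
  congr 1
  apply Finset.filter_congr
  intro u _
  simp [ne_comm]

lemma permDisagree_self (n : ℕ) (π : Equiv.Perm (Fin n)) : permDisagree n π π = 0 := by
  simp [permDisagree]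

/-- Permutations agreeing with `π` on a set `S` number at most `(n - S.card)!`. -/
lemma piece_card_le (n : ℕ) (π : Equiv.Perm (Fin n)) (S : Finset (Fin n)) :
    (univ.filter fun σ : Equiv.Perm (Fin n) => ∀ u ∈ S, σ u = π u).card
      ≤ (n - S.card)! := by
  classical
  have hcompl : (Sᶜ : Finset (Fin n)).card = n - S.card := by
    rw [Finset.card_compl, Fintype.card_fin]
  rw [← Fintype.card_coe]
  have key : Fintype.card ↥(univ.filter fun σ : Equiv.Perm (Fin n) => ∀ u ∈ S, σ u = π u)
      ≤ Fintype.card (↥(Sᶜ : Finset (Fin n)) ↪ ↥(Sᶜ : Finset (Fin n))) := by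
    have hmem : ∀ σ : ↥(univ.filter fun σ : Equiv.Perm (Fin n) => ∀ u ∈ S, σ u = π u),
        ∀ x : ↥(Sᶜ : Finset (Fin n)), π.symm (σ.1 x.1) ∈ (Sᶜ : Finset (Fin n)) := by
      rintro ⟨σ, hσ⟩ ⟨x, hx⟩
      rw [mem_filter] at hσ
      rw [Finset.mem_compl] at hx ⊢
      intro hu
      have h1 : σ (π.symm (σ x)) = π (π.symm (σ x)) := hσ.2 _ hu
      rw [Equiv.apply_symm_apply] at h1
      have : π.symm (σ x) = x := σ.injective h1
      rw [this] at hu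
      exact hx hu
    refine Fintype.card_le_of_injective
      (fun σ => ⟨fun x => ⟨π.symm (σ.1 x.1), hmem σ x⟩, ?_⟩) ?_
    · intro x y hxy
      apply Subtype.ext
      have := congrArg Subtype.val hxy
      simp only at this
      exact σ.1.injective (π.symm.injective this)
    · rintro ⟨σ, hσ⟩ ⟨σ', hσ'⟩ h
      apply Subtype.ext
      apply Equiv.ext
      intro u
      rw [mem_filter] at hσ hσ'
      by_cases hu : u ∈ S
      · rw [hσ.2 u hu, hσ'.2 u hu]
      · have hu' : u ∈ (Sᶜ : Finset (Fin n)) := Finset.mem_compl.2 hu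
        have := congrFun (congrArg (fun e => (Function.Embedding.toFun e)) h) ⟨u, hu'⟩
        simp only [Function.Embedding.coeFn_mk] at this
        have := congrArg Subtype.val this
        simp only at this
        exact π.symm.injective this
  calc Fintype.card ↥(univ.filter fun σ : Equiv.Perm (Fin n) => ∀ u ∈ S, σ u = π u)
      ≤ Fintype.card (↥(Sᶜ : Finset (Fin n)) ↪ ↥(Sᶜ : Finset (Fin n))) := key
    _ = (n - S.card)! := by
        rw [Fintype.card_embedding_eq, Fintype.card_coe, hcompl, Nat.descFactorial_self]

/-- Hamming ball bound: at most `C(n,d) * d!` permutations within distance `d` of `π`. -/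
lemma ball_card_le (n d : ℕ) (hd : d ≤ n) (π : Equiv.Perm (Fin n)) :
    (univ.filter fun σ : Equiv.Perm (Fin n) => permDisagree n σ π ≤ d).card
      ≤ n.choose d * d ! := by
  classical
  have hsub : (univ.filter fun σ : Equiv.Perm (Fin n) => permDisagree n σ π ≤ d) ⊆
      (powersetCard (n - d) univ).biUnion
        (fun S => univ.filter fun σ : Equiv.Perm (Fin n) => ∀ u ∈ S, σ u = π u) := by
    intro σ hσ
    rw [mem_filter] at hσ
    have hsplit : (univ.filter fun u => σ u = π u).card
        + (univ.filter fun u => ¬ σ u = π u).card = n := by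
      rw [card_filter_add_card_filter_not, Finset.card_univ, Fintype.card_fin]
    have hT : n - d ≤ (univ.filter fun u => σ u = π u).card := by
      have : (univ.filter fun u => ¬ σ u = π u).card ≤ d := hσ.2
      omega
    obtain ⟨S, hSsub, hScard⟩ := Finset.exists_subset_card_eq hT
    refine mem_biUnion.2 ⟨S, ?_, ?_⟩
    · exact Finset.mem_powersetCard.2 ⟨Finset.subset_univ _, hScard⟩
    · refine mem_filter.2 ⟨mem_univ _, fun u hu => ?_⟩
      have := hSsub hu
      rw [mem_filter] at this
      exact this.2
  calc (univ.filter fun σ : Equiv.Perm (Fin n) => permDisagree n σ π ≤ d).card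
      ≤ ((powersetCard (n - d) univ).biUnion
          (fun S => univ.filter fun σ : Equiv.Perm (Fin n) => ∀ u ∈ S, σ u = π u)).card :=
        card_le_card hsub
    _ ≤ ∑ S ∈ powersetCard (n - d) univ,
          (univ.filter fun σ : Equiv.Perm (Fin n) => ∀ u ∈ S, σ u = π u).card :=
        card_biUnion_le
    _ ≤ ∑ _S ∈ powersetCard (n - d) (univ : Finset (Fin n)), d ! := by
        refine Finset.sum_le_sum fun S hS => ?_
        have hScard : S.card = n - d := (Finset.mem_powersetCard.1 hS).2
        have := piece_card_le n π S
        rw [hScard] at this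
        have hnd : n - (n - d) = d := by omega
        rwa [hnd] at this
    _ = n.choose d * d ! := by
        rw [Finset.sum_const, smul_eq_mul, Finset.card_powersetCard, Finset.card_univ,
          Fintype.card_fin, Nat.choose_symm hd]

theorem permutation_packing (n : ℕ) (hn : 4 ≤ n) :
    ∃ A : Finset (Equiv.Perm (Fin n)),
      ((n : ℝ) / 24) ^ ((n : ℝ) / 6) ≤ (A.card : ℝ) ∧
      ∀ π ∈ A, ∀ π' ∈ A, π ≠ π' → 3 / 8 ≤ permHammingDist n π π' := by
  classical
  set d : ℕ := (3 * n - 1) / 8 with hd_def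
  have hdn : d ≤ n := by omega
  -- the "good" (well-separated) property
  set Good : Finset (Equiv.Perm (Fin n)) → Prop :=
    fun A => ∀ π ∈ A, ∀ π' ∈ A, π ≠ π' → 3 * n ≤ 8 * permDisagree n π π' with hGood_def
  have hne : ((univ : Finset (Finset (Equiv.Perm (Fin n)))).filter Good).Nonempty := by
    refine ⟨∅, mem_filter.2 ⟨mem_univ _, ?_⟩⟩
    intro π hπ
    simp at hπ
  obtain ⟨A, hA, hmax⟩ := Finset.exists_max_image _ Finset.card hne
  rw [mem_filter] at hA
  have hGood : Good A := hA.2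
  -- maximality gives covering
  have hcover : ∀ σ : Equiv.Perm (Fin n), ∃ π ∈ A, permDisagree n σ π ≤ d := by
    intro σ
    by_contra hc
    push_neg at hc
    have hσA : σ ∉ A := by
      intro h
      have := hc σ h
      rw [permDisagree_self] at this
      omega
    have hfar : ∀ π ∈ A, 3 * n ≤ 8 * permDisagree n σ π := by
      intro π hπ
      have := hc π hπ
      omega
    have hGood' : Good (insert σ A) := by
      intro π hπ π' hπ' hne'
      rcases mem_insert.1 hπ with h1 | h1 <;> rcases mem_insert.1 hπ' with h2 | h2
      · exact absurd (h1.trans h2.symm) hne'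
      · rw [h1]; exact hfar π' h2
      · rw [h2, permDisagree_comm]; exact hfar π h1
      · exact hGood π h1 π' h2 hne'
    have hle := hmax (insert σ A) (mem_filter.2 ⟨mem_univ _, hGood'⟩)
    rw [card_insert_of_notMem hσA] at hle
    omega
  -- counting
  have hcount : n ! ≤ A.card * (n.choose d * d !) := by
    have huniv : (univ : Finset (Equiv.Perm (Fin n))) ⊆
        A.biUnion (fun π => univ.filter fun σ => permDisagree n σ π ≤ d) := by
      intro σ _
      obtain ⟨π, hπ, h⟩ := hcover σ
      exact mem_biUnion.2 ⟨π, hπ, mem_filter.2 ⟨mem_univ _, h⟩⟩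
    calc n ! = Fintype.card (Equiv.Perm (Fin n)) := by
          rw [Fintype.card_perm, Fintype.card_fin]
      _ = (univ : Finset (Equiv.Perm (Fin n))).card := (Finset.card_univ).symm
      _ ≤ (A.biUnion (fun π => univ.filter fun σ => permDisagree n σ π ≤ d)).card :=
          card_le_card huniv
      _ ≤ ∑ π ∈ A, (univ.filter fun σ => permDisagree n σ π ≤ d).card := card_biUnion_le
      _ ≤ ∑ _π ∈ A, n.choose d * d ! :=
          Finset.sum_le_sum fun π _ => ball_card_le n d hdn π
      _ = A.card * (n.choose d * d !) := by rw [Finset.sum_const, smul_eq_mul]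
  have hfact : (n - d)! * (n.choose d * d !) = n ! := by
    have h := Nat.choose_mul_factorial_mul_factorial hdn
    rw [← h]; ring
  have hcard : (n - d)! ≤ A.card := by
    have hpos : 0 < n.choose d * d ! :=
      Nat.mul_pos (Nat.choose_pos hdn) (Nat.factorial_pos d)
    have h2 : (n - d)! * (n.choose d * d !) ≤ A.card * (n.choose d * d !) := by
      rw [hfact]; exact hcount
    exact Nat.le_of_mul_le_mul_right h2 hpos
  -- arithmetic: (n/24)^(n/6) ≤ (n-d)!
  refine ⟨A, ?_, ?_⟩
  · set m : ℕ := n - d with hm_def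
    set k : ℕ := m / 2 with hk_def
    set j : ℕ := m - k with hj_def
    have hkj : k + j = m := by omega
    have hpow : (k + 1) ^ j ≤ m ! := by
      calc (k + 1) ^ j ≤ k ! * (k + 1) ^ j :=
            Nat.le_mul_of_pos_left _ (Nat.factorial_pos k)
        _ ≤ (k + j)! := Nat.factorial_mul_pow_le_factorial
        _ = m ! := by rw [hkj]
    have h1 : ((n : ℝ) / 24) ^ ((n : ℝ) / 6) ≤ ((k + 1 : ℕ) : ℝ) ^ ((n : ℝ) / 6) := by
      apply Real.rpow_le_rpow (by positivity) _ (by positivity)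
      rw [div_le_iff₀ (by norm_num : (0:ℝ) < 24)]
      have : n ≤ (k + 1) * 24 := by omega
      exact_mod_cast this
    have h2 : ((k + 1 : ℕ) : ℝ) ^ ((n : ℝ) / 6) ≤ ((k + 1 : ℕ) : ℝ) ^ ((j : ℕ) : ℝ) := by
      apply Real.rpow_le_rpow_of_exponent_le
      · exact_mod_cast Nat.le_add_left 1 k
      · rw [div_le_iff₀ (by norm_num : (0:ℝ) < 6)]
        have : n ≤ j * 6 := by omega
        exact_mod_cast this
    have h3 : ((k + 1 : ℕ) : ℝ) ^ ((j : ℕ) : ℝ) = (((k + 1) ^ j : ℕ) : ℝ) := by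
      rw [Real.rpow_natCast]
      push_cast
      ring
    calc ((n : ℝ) / 24) ^ ((n : ℝ) / 6)
        ≤ ((k + 1 : ℕ) : ℝ) ^ ((n : ℝ) / 6) := h1
      _ ≤ ((k + 1 : ℕ) : ℝ) ^ ((j : ℕ) : ℝ) := h2
      _ = (((k + 1) ^ j : ℕ) : ℝ) := h3
      _ ≤ (m ! : ℝ) := by exact_mod_cast hpow
      _ ≤ (A.card : ℝ) := by exact_mod_cast hcard
  · intro π hπ π' hπ' hne'
    have h := hGood π hπ π' hπ' hne'
    unfold permHammingDist
    have hn0 : (0:ℝ) < (n : ℝ) := by positivity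
    rw [inv_mul_eq_div, le_div_iff₀ hn0, div_mul_eq_mul_div, div_le_iff₀ (by norm_num : (0:ℝ) < 8)]
    have : 3 * n ≤ ((univ.filter (fun u => π u ≠ π' u)).card) * 8 := by
      unfold permDisagree at h
      omega
    exact_mod_cast this
end

section
/- Let π ∈ (S_n)^p, and assume π is normalized so that the identity attains the minimum in err(π, π*) where π* = (id,…,id). Let C_j = {u : π_j(u) ≠ u}, B = B(π), B^* = B(π*). Then the number of nonzero entries of B − B^* is at most C·p·‖B^* − B^*B‖₁ for an absolute constant C, and consequently ‖B − B^*‖_F ≤ C'·√(‖B^* − B^*B‖₁ / p) and ‖B − B^*‖_op ≤ 2. -/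
open Finset

/-- The set of edges of the complete graph on `Fin n`. -/
abbrev GraphEdge (n : ℕ) := {e : Sym2 (Fin n) // ¬ e.IsDiag}

/-- The edge permutation `Π` induced by a node permutation `π`. -/
def edgeMap {n : ℕ} (σ : Equiv.Perm (Fin n)) (e : GraphEdge n) : GraphEdge n :=
  ⟨Sym2.map σ e.1, fun h => e.2 ((Sym2.isDiag_map σ.injective).mp h)⟩

/-- The normalized edge alignment matrix `B(π)` of a `p`-tuple of permutations. -/
noncomputable def Bmat {n p : ℕ} (π : Fin p → Equiv.Perm (Fin n)) :
    Matrix (Fin p × GraphEdge n) (Fin p × GraphEdge n) ℝ :=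
  fun x y => (p : ℝ)⁻¹ * (if edgeMap (π x.1) x.2 = edgeMap (π y.1) y.2 then 1 else 0)

/-- Frobenius norm of a matrix. -/
noncomputable def frobNorm {ι κ : Type*} [Fintype ι] [Fintype κ]
    (M : Matrix ι κ ℝ) : ℝ := Real.sqrt (∑ i, ∑ j, (M i j) ^ 2)

/-- Operator (spectral) norm of a square matrix. -/
noncomputable def opNorm {ι : Type*} [Fintype ι] [DecidableEq ι]
    (M : Matrix ι ι ℝ) : ℝ := ‖Matrix.toEuclideanCLM (𝕜 := ℝ) M‖

/-- Number of mismatched (vertex, graph) pairs of a tuple of permutations w.r.t. identity. -/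
def mismatches {n p : ℕ} (π : Fin p → Equiv.Perm (Fin n)) : ℕ :=
  ∑ j : Fin p, (Finset.univ.filter (fun u : Fin n => π j u ≠ u)).card

/-!
`B(π)` and `B(id)` are orthogonal projections, which gives the operator-norm bound.

For the count, fix `j, e, j'` and look at the entries `((j, e), (j', e'))` of `B(π) - B(id)`.
Since `Π_{j'}` permutes the edges, they all vanish when `Π_j e = Π_{j'} e`, and otherwise only
`e' = e` and `e' = Π_{j'}⁻¹ Π_j e` can be nonzero. So there are at most `2 D` nonzero entries,
where `D = edgeDisagreement π` counts the triples `(e, j, k)` with `Π_k e ≠ Π_j e`. The entries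
of `B(id) - B(id) B(π)` with `e' = e` are `#{k | Π_k e ≠ Π_{j'} e} / p²`, so
`D ≤ p ‖B(id) - B(id) B(π)‖₁`. Every entry of `B(π) - B(id)` is at most `1 / p` in absolute
value, so the count also bounds the Frobenius norm.
-/

lemma isStarProjection_of_card_fiber {ι κ : Type*} [Fintype ι] [DecidableEq κ] (f : ι → κ)
    {m : ℕ} (hm : m ≠ 0) (hf : ∀ x, #{z | f z = f x} = m) :
    IsStarProjection (Matrix.of fun x y => (m : ℝ)⁻¹ * if f x = f y then 1 else 0) where
  isIdempotentElem := by
    ext x y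
    have hsummand : ∀ z, ((m : ℝ)⁻¹ * if f x = f z then 1 else 0) *
        ((m : ℝ)⁻¹ * if f z = f y then 1 else 0) =
        (m : ℝ)⁻¹ * (m : ℝ)⁻¹ * (if f z = f x then 1 else 0) * if f x = f y then 1 else 0 := by
      intro z
      split_ifs <;> simp_all
    simp only [Matrix.mul_apply, Matrix.of_apply, hsummand, ← Finset.sum_mul,
      ← Finset.mul_sum, Finset.sum_boole, hf]
    field_simp [Nat.cast_ne_zero.mpr hm]
  isSelfAdjoint := by
    ext x y
    simp [eq_comm]

lemma opNorm_le_one_of_isStarProjection {ι : Type*} [Fintype ι] [DecidableEq ι]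
    {M : Matrix ι ι ℝ} (hM : IsStarProjection M) : opNorm M ≤ 1 :=
  (hM.map (Matrix.toEuclideanCLM (𝕜 := ℝ))).norm_le

lemma opNorm_sub_le {ι : Type*} [Fintype ι] [DecidableEq ι] (M N : Matrix ι ι ℝ) :
    opNorm (M - N) ≤ opNorm M + opNorm N := by
  simpa only [opNorm, map_sub] using norm_sub_le _ _

lemma frobNorm_le_of_abs_le {ι κ : Type*} [Fintype ι] [Fintype κ] (M : Matrix ι κ ℝ) {c : ℝ}
    (hc : 0 ≤ c) (hM : ∀ i j, |M i j| ≤ c) :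
    frobNorm M ≤ c * √(Set.ncard {q : ι × κ | M q.1 q.2 ≠ 0}) := by
  classical
  have hsq : ∀ i j, M i j ^ 2 ≤ c ^ 2 * if M i j ≠ 0 then 1 else 0 := by
    intro i j
    by_cases h : M i j = 0
    · simp [h]
    · simpa [h, sq_abs] using pow_le_pow_left₀ (abs_nonneg _) (hM i j) 2
  have hcard : (Set.ncard {q : ι × κ | M q.1 q.2 ≠ 0} : ℝ) =
      ∑ i, ∑ j, if M i j ≠ 0 then 1 else 0 := by
    rw [Set.ncard_eq_toFinset_card', Set.toFinset_ofPred, Finset.card_filter,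
      Fintype.sum_prod_type]
    push_cast
    rfl
  calc frobNorm M ≤ √(c ^ 2 * Set.ncard {q : ι × κ | M q.1 q.2 ≠ 0}) := by
        simp_rw [hcard, Finset.mul_sum]
        exact Real.sqrt_le_sqrt (sum_le_sum fun i _ => sum_le_sum fun j _ => hsq i j)
    _ = c * √(Set.ncard {q : ι × κ | M q.1 q.2 ≠ 0}) := by
        rw [Real.sqrt_mul (sq_nonneg c), Real.sqrt_sq hc]

lemma Equiv.card_filter_apply_eq_not_iff_le {α β : Type*} [Fintype α] [DecidableEq α]
    [DecidableEq β] (f : α ≃ β) (a : α) (c : β) :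
    #{b | ¬(f b = c ↔ b = a)} ≤ if f a = c then 0 else 2 := by
  split_ifs with h
  · simp only [nonpos_iff_eq_zero, card_eq_zero, filter_eq_empty_iff, mem_univ, true_implies,
      not_not]
    intro b
    rw [← h, f.apply_eq_iff_eq]
  · calc #{b | ¬(f b = c ↔ b = a)} ≤ #{a, f.symm c} :=
          card_le_card fun b hb => by
            simp only [mem_filter, mem_univ, true_and] at hb
            simp only [mem_insert, mem_singleton, Equiv.eq_symm_apply]
            tauto
      _ ≤ 2 := card_le_two

lemma edgeMap_one {n : ℕ} (e : GraphEdge n) : edgeMap 1 e = e := by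
  simp [edgeMap]

lemma edgeMap_mul {n : ℕ} (σ τ : Equiv.Perm (Fin n)) (e : GraphEdge n) :
    edgeMap (σ * τ) e = edgeMap σ (edgeMap τ e) := by
  simp [edgeMap, Sym2.map_map]

def edgePerm {n : ℕ} (σ : Equiv.Perm (Fin n)) : Equiv.Perm (GraphEdge n) where
  toFun := edgeMap σ
  invFun := edgeMap σ⁻¹
  left_inv e := by simp [← edgeMap_mul, edgeMap_one]
  right_inv e := by simp [← edgeMap_mul, edgeMap_one]

@[simp]
lemma edgePerm_apply {n : ℕ} (σ : Equiv.Perm (Fin n)) (e : GraphEdge n) :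
    edgePerm σ e = edgeMap σ e := rfl

lemma card_filter_edgeMap_eq {n : ℕ} (σ : Equiv.Perm (Fin n)) (g : GraphEdge n) :
    #{e | edgeMap σ e = g} = 1 := by
  change #{e | edgePerm σ e = g} = 1
  simp_rw [← Equiv.eq_symm_apply, filter_eq', mem_univ, if_true, card_singleton]

section Alignment

variable {n p : ℕ}

lemma isStarProjection_Bmat (hp : p ≠ 0) (π : Fin p → Equiv.Perm (Fin n)) :
    IsStarProjection (Bmat π) := by
  refine isStarProjection_of_card_fiber (fun x : Fin p × GraphEdge n => edgeMap (π x.1) x.2) hp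
    fun x => ?_
  rw [Finset.card_filter, Fintype.sum_prod_type]
  simp [card_filter_edgeMap_eq]

lemma abs_Bmat_sub_Bmat_le (π π' : Fin p → Equiv.Perm (Fin n)) (x y : Fin p × GraphEdge n) :
    |(Bmat π - Bmat π') x y| ≤ (p : ℝ)⁻¹ := by
  simp only [Matrix.sub_apply, Bmat, ← mul_sub, abs_mul, abs_inv, Nat.abs_cast]
  apply mul_le_of_le_one_right (by positivity)
  split_ifs <;> norm_num

def edgeDisagreement (π : Fin p → Equiv.Perm (Fin n)) : ℕ :=
  ∑ e : GraphEdge n, ∑ j : Fin p, #{k | edgeMap (π k) e ≠ edgeMap (π j) e}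

lemma ncard_Bmat_ne_le (π : Fin p → Equiv.Perm (Fin n)) :
    Set.ncard {q : (Fin p × GraphEdge n) × (Fin p × GraphEdge n) |
      Bmat π q.1 q.2 ≠ Bmat (n := n) (p := p) (fun _ => 1) q.1 q.2} ≤ 2 * edgeDisagreement π := by
  have hblock : ∀ j e j', #{e' | Bmat π (j, e) (j', e') ≠ Bmat (fun _ => 1) (j, e) (j', e')} ≤
      if edgeMap (π j') e = edgeMap (π j) e then 0 else 2 := by
    intro j e j'
    refine (card_le_card fun e' he' => ?_).trans
      ((edgePerm (π j')).card_filter_apply_eq_not_iff_le e (edgeMap (π j) e))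
    simp only [mem_filter, mem_univ, true_and] at he' ⊢
    intro hiff
    rw [edgePerm_apply, eq_comm, eq_comm (a := e')] at hiff
    simp only [Bmat, edgeMap_one, hiff] at he'
    exact he' rfl
  calc Set.ncard {q : (Fin p × GraphEdge n) × (Fin p × GraphEdge n) |
        Bmat π q.1 q.2 ≠ Bmat (n := n) (p := p) (fun _ => 1) q.1 q.2}
      = ∑ j, ∑ e, ∑ j', #{e' | Bmat π (j, e) (j', e') ≠ Bmat (fun _ => 1) (j, e) (j', e')} := by
        rw [Set.ncard_eq_toFinset_card', Set.toFinset_ofPred, card_filter]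
        simp_rw [Fintype.sum_prod_type, card_filter]
    _ ≤ ∑ j, ∑ e, ∑ j', if edgeMap (π j') e = edgeMap (π j) e then 0 else 2 := by
        gcongr with j _ e _ j' _
        exact hblock j e j'
    _ = 2 * edgeDisagreement π := by
        rw [edgeDisagreement, Finset.sum_comm]
        simp_rw [card_filter, Finset.mul_sum, mul_ite, mul_one, mul_zero, ite_not]

lemma Bmat_one_mul_Bmat_apply (π : Fin p → Equiv.Perm (Fin n)) (x y : Fin p × GraphEdge n) :
    (Bmat (n := n) (p := p) (fun _ => 1) * Bmat π) x y =
      (p : ℝ)⁻¹ * (p : ℝ)⁻¹ * #{k | edgeMap (π k) x.2 = edgeMap (π y.1) y.2} := by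
  rw [card_filter]
  simp only [Matrix.mul_apply, Fintype.sum_prod_type, Bmat, edgeMap_one,
    mul_mul_mul_comm _ (ite _ _ _), ite_mul, one_mul, zero_mul, Finset.sum_ite_eq, mem_univ,
    if_true, ← Finset.mul_sum, Nat.cast_sum, Nat.cast_ite, Nat.cast_one, Nat.cast_zero]

lemma edgeDisagreement_le_mul_l1Norm (hp : p ≠ 0) (π : Fin p → Equiv.Perm (Fin n)) :
    (edgeDisagreement π : ℝ) ≤
      p * l1Norm (Bmat (n := n) (p := p) (fun _ => 1) - Bmat (fun _ => 1) * Bmat π) := by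
  have hp' : (p : ℝ) ≠ 0 := Nat.cast_ne_zero.mpr hp
  set M : Matrix (Fin p × GraphEdge n) (Fin p × GraphEdge n) ℝ :=
    Bmat (fun _ => 1) - Bmat (fun _ => 1) * Bmat π
  have hsame : ∀ j e j', M (j, e) (j', e) =
      (p : ℝ)⁻¹ * (p : ℝ)⁻¹ * #{k | edgeMap (π k) e ≠ edgeMap (π j') e} := by
    intro j e j'
    have hsplit : (#{k | edgeMap (π k) e ≠ edgeMap (π j') e} : ℝ) =
        p - #{k | edgeMap (π k) e = edgeMap (π j') e} := by
      rw [eq_sub_iff_add_eq, ← Nat.cast_add, add_comm, card_filter_add_card_filter_not,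
        card_univ, Fintype.card_fin]
    simp only [M, Matrix.sub_apply, Bmat_one_mul_Bmat_apply, hsplit, Bmat, edgeMap_one, if_true]
    field_simp
  calc (edgeDisagreement π : ℝ) = p * ∑ j, ∑ e, ∑ j', M (j, e) (j', e) := by
        simp only [hsame, ← Finset.mul_sum]
        rw [Finset.sum_const, card_univ, Fintype.card_fin, nsmul_eq_mul, edgeDisagreement]
        push_cast
        simp only [← mul_assoc, mul_inv_cancel₀ hp', one_mul, inv_mul_cancel₀ hp']
    _ ≤ p * l1Norm M := by
        rw [l1Norm, Fintype.sum_prod_type]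
        gcongr with j _ e _
        rw [Fintype.sum_prod_type]
        gcongr with j' _
        exact (le_abs_self _).trans <|
          single_le_sum (f := fun e' => |M (j, e) (j', e')|) (fun _ _ => abs_nonneg _) (mem_univ e)

end Alignment

theorem nonzero_entries_and_norms_of_B_minus_Bstar :
    ∃ C C' : ℝ, 0 < C ∧ 0 < C' ∧
      ∀ (n p : ℕ), 2 ≤ n → 1 ≤ p →
        ∀ π : Fin p → Equiv.Perm (Fin n),
          (∀ ψ : Equiv.Perm (Fin n), mismatches π ≤ mismatches (fun j => ψ * π j)) →
          (Set.ncard {q : (Fin p × GraphEdge n) × (Fin p × GraphEdge n) |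
              Bmat π q.1 q.2 ≠ Bmat (n := n) (p := p) (fun _ => 1) q.1 q.2} : ℝ) ≤
            C * p * l1Norm (Bmat (n := n) (p := p) (fun _ => 1) -
              Bmat (fun _ => 1) * Bmat π) ∧
          frobNorm (Bmat π - Bmat (n := n) (p := p) (fun _ => 1)) ≤
            C' * Real.sqrt (l1Norm (Bmat (n := n) (p := p) (fun _ => 1) -
              Bmat (fun _ => 1) * Bmat π) / p) ∧
          opNorm (Bmat π - Bmat (n := n) (p := p) (fun _ => 1)) ≤ 2 := by
  refine ⟨2, √2, by norm_num, by positivity, fun n p _ hp π _ => ?_⟩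
  have hp0 : p ≠ 0 := Nat.one_le_iff_ne_zero.mp hp
  set L := l1Norm (Bmat (n := n) (p := p) (fun _ => 1) - Bmat (fun _ => 1) * Bmat π)
  have hcount : (Set.ncard {q : (Fin p × GraphEdge n) × (Fin p × GraphEdge n) |
      Bmat π q.1 q.2 ≠ Bmat (n := n) (p := p) (fun _ => 1) q.1 q.2} : ℝ) ≤ 2 * p * L :=
    calc _ ≤ 2 * (edgeDisagreement π : ℝ) := by exact_mod_cast ncard_Bmat_ne_le π
      _ ≤ 2 * (p * L) := by gcongr; exact edgeDisagreement_le_mul_l1Norm hp0 π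
      _ = 2 * p * L := by ring
  refine ⟨hcount, ?_, (opNorm_sub_le _ _).trans ?_⟩
  · calc frobNorm (Bmat π - Bmat (n := n) (p := p) (fun _ => 1))
        ≤ (p : ℝ)⁻¹ * √(Set.ncard {q : (Fin p × GraphEdge n) × (Fin p × GraphEdge n) |
            Bmat π q.1 q.2 ≠ Bmat (n := n) (p := p) (fun _ => 1) q.1 q.2}) := by
          simpa only [Matrix.sub_apply, sub_ne_zero] using
            frobNorm_le_of_abs_le _ (by positivity) (abs_Bmat_sub_Bmat_le π _)
      _ ≤ (p : ℝ)⁻¹ * √(2 * p * L) := by gcongr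
      _ = √2 * √(L / p) := by
          rw [← Real.sqrt_mul zero_le_two, show 2 * (p : ℝ) * L = p ^ 2 * (2 * (L / p)) by
            field_simp, Real.sqrt_mul (by positivity), Real.sqrt_sq (by positivity)]
          field_simp
  · linarith [opNorm_le_one_of_isStarProjection (isStarProjection_Bmat hp0 π),
      opNorm_le_one_of_isStarProjection (isStarProjection_Bmat (n := n) hp0 fun _ => 1)]
end

section
/- Let π* = (π*₁,…,π*_p) be uniform on (S_n)^p and let x = 1{π*₁(1) = π*₂(1)}. Let ψ be a bijection from a finite multiset β of edges to a multiset of edges of the same size. Then for every submultiset γ ⊊ β: (1) |E[x·∏_{e∈β} 1{Π*₁(e)=Π*₂(ψ(e))}]| ≤ (√2/(n−|{1}∪supp(β)|))^{|{1}∪supp(β)|}, and (2) |E[∏_{e∈β\γ} 1{Π*₁(e)=Π*₂(ψ(e))}]| ≤ (√2/(n−|supp(β\γ)|))^{|supp(β\γ)|}. -/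
open Finset

/-- Expectation with respect to two independent uniform permutations of `Fin n`. -/
noncomputable def permExpect (n : ℕ)
    (f : Equiv.Perm (Fin n) × Equiv.Perm (Fin n) → ℝ) : ℝ :=
  (∑ σ : Equiv.Perm (Fin n) × Equiv.Perm (Fin n), f σ) /
    (Fintype.card (Equiv.Perm (Fin n) × Equiv.Perm (Fin n)))

/-- Vertices incident to some edge of the (indexed) multiset `a` restricted to `t`. -/
def multisetSupp {n : ℕ} {ι : Type*} [Fintype ι] [DecidableEq ι]
    (a : ι → GraphEdge n) (t : Finset ι) : Finset (Fin n) :=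
  Finset.univ.filter (fun u : Fin n => ∃ i ∈ t, u ∈ (a i).1)

/-! For fixed `σ₂`, the integrand is the indicator that `σ₁` lies in the set of permutations
that agree with a prescribed map on a set `D` of revealed vertices and send each edge `a i` onto
`σ₂(b i)`. Revealing the edges one at a time, an edge with two unrevealed endpoints leaves two
choices for their images, and an edge with a revealed endpoint at most one; so that set has at
most `2 ^ (m / 2) * (n - |D ∪ supp|)!` elements, where `m` counts the unrevealed vertices of the
support. Dividing by `n!` and using `(n - k) ^ k * (n - k)! ≤ n!` gives `(√2 / (n - k)) ^ k`. -/

open Equiv Fintype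
open scoped Nat

section Counting

variable {α ι : Type*} [Fintype α] [DecidableEq α]

def edgeSupport (e : ι → Sym2 α) (t : Finset ι) : Finset α :=
  univ.filter fun u ↦ ∃ i ∈ t, u ∈ e i

def permsMapping (e c : ι → Sym2 α) (t : Finset ι) (D : Finset α) (g : α → α) :
    Finset (Perm α) :=
  univ.filter fun σ ↦ (∀ u ∈ D, σ u = g u) ∧ ∀ i ∈ t, (e i).map σ = c i

variable {e c : ι → Sym2 α} {t : Finset ι} {D : Finset α} {g : α → α} {σ : Perm α}

@[simp]
lemma mem_permsMapping :
    σ ∈ permsMapping e c t D g ↔ (∀ u ∈ D, σ u = g u) ∧ ∀ i ∈ t, (e i).map σ = c i := by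
  simp [permsMapping]

@[simp]
lemma edgeSupport_empty : edgeSupport e ∅ = ∅ := by
  simp [edgeSupport]

lemma edgeSupport_mono {s : Finset ι} (h : s ⊆ t) : edgeSupport e s ⊆ edgeSupport e t :=
  fun u ↦ by
    simp only [edgeSupport, mem_filter, mem_univ, true_and]
    exact fun ⟨i, hi, hu⟩ ↦ ⟨i, h hi, hu⟩

lemma edgeSupport_insert [DecidableEq ι] {i : ι} {u v : α} (h : e i = s(u, v)) :
    edgeSupport e (insert i t) = insert u (insert v (edgeSupport e t)) := by
  ext w
  simp only [edgeSupport, mem_filter, mem_univ, true_and, mem_insert, exists_eq_or_imp, h,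
    Sym2.mem_iff]
  tauto

lemma card_perm_fixing (D : Finset α) :
    #{τ : Perm α | ∀ u ∈ D, τ u = u} = (card α - #D)! := by
  rw [← Fintype.card_subtype, ← card_coe D, ← card_subtype_compl, ← Fintype.card_perm]
  exact card_congr ((subtypeEquivRight fun τ ↦ by simp).trans
    (Perm.subtypeEquivSubtypePerm (· ∉ D)).symm)

lemma card_perm_eqOn_le (D : Finset α) (g : α → α) :
    #{σ : Perm α | ∀ u ∈ D, σ u = g u} ≤ (card α - #D)! := by
  obtain h | ⟨σ₀, hσ₀⟩ := ({σ : Perm α | ∀ u ∈ D, σ u = g u} : Finset _).eq_empty_or_nonempty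
  · simp [h]
  rw [← card_perm_fixing D]
  refine card_le_card_of_injOn (σ₀⁻¹ * ·) (fun σ hσ ↦ ?_) (mul_right_injective _).injOn
  simp only [coe_filter, mem_filter, mem_univ, true_and, Set.mem_ofPred_eq] at hσ₀ hσ ⊢
  intro u hu
  simp [hσ u hu, ← hσ₀ u hu]

lemma card_edgeSupport_insert_sdiff [DecidableEq ι] {i : ι} {u v : α} (h : e i = s(u, v))
    (hne : u ≠ v) (hu : u ∉ D) (hv : v ∉ D) :
    #(edgeSupport e (insert i t) \ D) = #(edgeSupport e t \ insert u (insert v D)) + 2 := by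
  have : edgeSupport e (insert i t) \ D =
      insert u (insert v (edgeSupport e t \ insert u (insert v D))) := by
    ext w
    rw [edgeSupport_insert h]
    by_cases hwu : w = u <;> by_cases hwv : w = v <;> simp_all
  rw [this, card_insert_of_notMem (by simp [hne]), card_insert_of_notMem (by simp)]

lemma card_permsMapping_le_mul_card_image {s : Finset ι} (hts : t ⊆ s) (u v : α) (B : ℕ)
    (hB : ∀ g', #(permsMapping e c t (insert u (insert v D)) g') ≤ B) :
    #(permsMapping e c s D g) ≤ B * #((permsMapping e c s D g).image fun σ ↦ (σ u, σ v)) := by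
  refine card_le_mul_card_image _ B fun p _ ↦
    (card_le_card fun σ hσ ↦ ?_).trans (hB (Function.update (Function.update g v p.2) u p.1))
  simp only [mem_filter, mem_permsMapping] at hσ ⊢
  obtain ⟨⟨hD, he⟩, rfl⟩ := hσ
  refine ⟨fun w hw ↦ ?_, fun j hj ↦ he j (hts hj)⟩
  simp only [Function.update_apply]
  split_ifs with hwu hwv <;> simp_all

lemma card_image_pair_le_two {i : ι} {u v : α} (h : e i = s(u, v)) (hi : i ∈ t) :
    #((permsMapping e c t D g).image fun σ ↦ (σ u, σ v)) ≤ 2 := by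
  obtain ⟨x, y, hxy⟩ : ∃ x y, c i = s(x, y) := Sym2.exists.mp ⟨c i, rfl⟩
  refine (card_le_card fun p hp ↦ ?_).trans (card_le_two (a := (x, y)) (b := (y, x)))
  simp only [mem_image, mem_permsMapping] at hp
  obtain ⟨σ, ⟨-, he⟩, rfl⟩ := hp
  have := he i hi
  rw [h, hxy, Sym2.map_mk, Sym2.eq_iff] at this
  rcases this with ⟨h1, h2⟩ | ⟨h1, h2⟩ <;> simp [h1, h2]

lemma card_image_pair_le_one {i : ι} {u v : α} (h : e i = s(u, v)) (hi : i ∈ t)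
    (hD : u ∈ D ∨ v ∈ D) :
    #((permsMapping e c t D g).image fun σ ↦ (σ u, σ v)) ≤ 1 := by
  simp only [card_le_one, mem_image, mem_permsMapping]
  rintro _ ⟨σ, ⟨hσD, hσe⟩, rfl⟩ _ ⟨τ, ⟨hτD, hτe⟩, rfl⟩
  have hpair : s(σ u, σ v) = s(τ u, τ v) := by
    simpa [h] using (hσe i hi).trans (hτe i hi).symm
  rcases hD with hu | hv
  · rw [hσD u hu, hτD u hu, Sym2.congr_right] at hpair
    simp [hσD u hu, hτD u hu, hpair]
  · rw [hσD v hv, hτD v hv, Sym2.congr_left] at hpair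
    simp [hσD v hv, hτD v hv, hpair]

theorem card_permsMapping_le [DecidableEq ι] (he : ∀ i ∈ t, ¬ (e i).IsDiag) (D : Finset α)
    (g : α → α) :
    #(permsMapping e c t D g) ≤
      2 ^ (#(edgeSupport e t \ D) / 2) * (card α - #(D ∪ edgeSupport e t))! := by
  induction t using Finset.induction_on generalizing D g with
  | empty => simpa [permsMapping] using card_perm_eqOn_le D g
  | @insert i t _ ih =>
    obtain ⟨u, v, huv⟩ : ∃ u v, e i = s(u, v) := Sym2.exists.mp ⟨e i, rfl⟩
    have hne : u ≠ v := fun h ↦ he i (mem_insert_self i t) (by simp [huv, h])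
    have hunion : insert u (insert v D) ∪ edgeSupport e t = D ∪ edgeSupport e (insert i t) := by
      rw [edgeSupport_insert huv]
      ext
      simp only [mem_union, mem_insert]
      tauto
    have hcard := card_permsMapping_le_mul_card_image (g := g) (subset_insert i t) u v _ fun g' ↦
      (ih (fun j hj ↦ he j (mem_insert_of_mem hj)) _ g').trans_eq (by rw [hunion])
    by_cases hD : u ∈ D ∨ v ∈ D
    · refine hcard.trans ?_
      grw [card_image_pair_le_one huv (mem_insert_self i t) hD, mul_one]
      gcongr
      · exact one_le_two
      · exact edgeSupport_mono (subset_insert i t)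
      · exact (subset_insert _ _).trans (subset_insert _ _)
    · push Not at hD
      refine hcard.trans ?_
      grw [card_image_pair_le_two huv (mem_insert_self i t),
        card_edgeSupport_insert_sdiff huv hne hD.1 hD.2, Nat.add_div_right _ two_pos, pow_succ]
      rw [mul_right_comm]

theorem card_permsMapping_le' [DecidableEq ι] (he : ∀ i ∈ t, ¬ (e i).IsDiag) (D : Finset α)
    (g : α → α) :
    #(permsMapping e c t D g) ≤
      2 ^ (#(D ∪ edgeSupport e t) / 2) * (card α - #(D ∪ edgeSupport e t))! := by
  grw [card_permsMapping_le he]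
  gcongr
  · exact one_le_two
  · exact sdiff_subset.trans subset_union_right

end Counting

lemma multisetSupp_eq_edgeSupport {n : ℕ} {ι : Type*} [Fintype ι] [DecidableEq ι]
    (a : ι → GraphEdge n) (t : Finset ι) :
    multisetSupp a t = edgeSupport (fun i ↦ (a i).1) t :=
  rfl

open Real

lemma two_pow_half_mul_factorial_div_le {n k : ℕ} (hk : k < n) :
    ((2 ^ (k / 2) * (n - k)! : ℕ) : ℝ) / n ! ≤ (√2 / (n - k)) ^ k := by
  have hpow : (2 : ℝ) ^ (k / 2) ≤ √2 ^ k := by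
    calc (2 : ℝ) ^ (k / 2) = √2 ^ (2 * (k / 2)) := by rw [pow_mul, sq_sqrt zero_le_two]
      _ ≤ √2 ^ k := pow_le_pow_right₀ one_lt_sqrt_two.le (Nat.mul_div_le k 2)
  have hfac : ((n - k : ℕ) : ℝ) ^ k * (n - k)! ≤ n ! := by
    norm_cast
    calc (n - k) ^ k * (n - k)! ≤ (n - k)! * (n - k + 1) ^ k := by
          rw [mul_comm]; gcongr; exact Nat.le_succ _
      _ ≤ (n - k + k)! := Nat.factorial_mul_pow_le_factorial
      _ = n ! := by rw [Nat.sub_add_cancel hk.le]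
  have hnk : (0 : ℝ) < ((n - k : ℕ) : ℝ) := by exact_mod_cast Nat.sub_pos_of_lt hk
  rw [div_pow, ← Nat.cast_sub hk.le, div_le_div_iff₀ (by positivity) (by positivity)]
  push_cast
  calc (2 : ℝ) ^ (k / 2) * (n - k)! * ((n - k : ℕ) : ℝ) ^ k
      = 2 ^ (k / 2) * (((n - k : ℕ) : ℝ) ^ k * (n - k)!) := by ring
    _ ≤ √2 ^ k * n ! := by gcongr

lemma abs_permExpect_indicator_le {n k : ℕ} (hk : k < n)
    (S : Perm (Fin n) → Finset (Perm (Fin n))) (hS : ∀ τ, #(S τ) ≤ 2 ^ (k / 2) * (n - k)!) :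
    |permExpect n fun σ ↦ if σ.1 ∈ S σ.2 then 1 else 0| ≤ (√2 / (n - k)) ^ k := by
  have hsum : ∑ σ : Perm (Fin n) × Perm (Fin n), (if σ.1 ∈ S σ.2 then 1 else 0 : ℝ) =
      ∑ τ, (#(S τ) : ℝ) := by
    rw [Fintype.sum_prod_type_right]
    simp
  rw [abs_of_nonneg (by unfold permExpect; positivity), permExpect, hsum, Fintype.card_prod,
    card_perm, Fintype.card_fin]
  calc (∑ τ, (#(S τ) : ℝ)) / ((n ! * n ! : ℕ) : ℝ)
      ≤ (n ! * (2 ^ (k / 2) * (n - k)! : ℕ) : ℝ) / (n ! * n ! : ℕ) := by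
        gcongr
        calc ∑ τ, (#(S τ) : ℝ) ≤ ∑ _τ : Perm (Fin n), ((2 ^ (k / 2) * (n - k)! : ℕ) : ℝ) :=
              sum_le_sum fun τ _ ↦ mod_cast hS τ
          _ = _ := by simp [Fintype.card_perm]
    _ = ((2 ^ (k / 2) * (n - k)! : ℕ) : ℝ) / n ! := by
        push_cast
        rw [mul_div_mul_left _ _ (by positivity)]
    _ ≤ (√2 / (n - k)) ^ k := two_pow_half_mul_factorial_div_le hk

theorem moment_bounds
    (n : ℕ) (hn : 0 < n)
    {ι : Type*} [Fintype ι] [DecidableEq ι]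
    (a b : ι → GraphEdge n)
    (hsupp : (insert (⟨0, hn⟩ : Fin n) (multisetSupp a Finset.univ)).card < n) :
    (|permExpect n (fun σ =>
        (if σ.1 ⟨0, hn⟩ = σ.2 ⟨0, hn⟩ then (1 : ℝ) else 0) *
          ∏ i : ι, (if Sym2.map σ.1 (a i).1 = Sym2.map σ.2 (b i).1
            then (1 : ℝ) else 0))| ≤
      (Real.sqrt 2 /
          ((n : ℝ) - (insert (⟨0, hn⟩ : Fin n) (multisetSupp a Finset.univ)).card)) ^
        (insert (⟨0, hn⟩ : Fin n) (multisetSupp a Finset.univ)).card)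
    ∧ ∀ t : Finset ι, t.Nonempty →
      |permExpect n (fun σ =>
          ∏ i ∈ t, (if Sym2.map σ.1 (a i).1 = Sym2.map σ.2 (b i).1
            then (1 : ℝ) else 0))| ≤
        (Real.sqrt 2 / ((n : ℝ) - (multisetSupp a t).card)) ^ (multisetSupp a t).card := by
  have hcard (τ : Perm (Fin n)) (t : Finset ι) (D : Finset (Fin n)) (g : Fin n → Fin n) :=
    card_permsMapping_le' (e := fun i ↦ (a i).1) (c := fun i ↦ (b i).1.map τ) (t := t)
      (fun i _ ↦ (a i).2) D g
  refine ⟨?_, fun t _ ↦ ?_⟩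
  · convert abs_permExpect_indicator_le hsupp (fun τ ↦ permsMapping (fun i ↦ (a i).1)
      (fun i ↦ (b i).1.map τ) univ {⟨0, hn⟩} fun _ ↦ τ ⟨0, hn⟩) fun τ ↦ ?_ using 4
    · rw [Fintype.prod_boole, ite_zero_mul_ite_zero, mul_one]
      simp
    · simpa [← insert_eq, multisetSupp_eq_edgeSupport] using
        hcard τ univ {⟨0, hn⟩} fun _ ↦ τ ⟨0, hn⟩
  · have hk : (multisetSupp a t).card < n :=
      (card_le_card ((edgeSupport_mono (subset_univ t)).trans (subset_insert _ _))).trans_lt hsupp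
    convert abs_permExpect_indicator_le hk (fun τ ↦ permsMapping (fun i ↦ (a i).1)
      (fun i ↦ (b i).1.map τ) t ∅ id) fun τ ↦ ?_ using 4
    · simp [Finset.prod_boole]
    · simpa [multisetSupp_eq_edgeSupport] using hcard τ t ∅ id
end

section
/- For every π, π' ∈ (S_n)^p and permutations: (1 − err(π, π'))² ≤ 1 − ‖M^π − M^{π'}‖_F² / (2np²), where M^π is the node alignment matrix of π and err is the misclassification proportion minimized over a global permutation. -/
open Finset

/-- The node alignment matrix `M^π` of a `p`-tuple of permutations. -/
noncomputable def Mmat {n p : ℕ} (π : Fin p → Equiv.Perm (Fin n)) :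
    Matrix (Fin n × Fin p) (Fin n × Fin p) ℝ :=
  fun x y => if π x.2 x.1 = π y.2 y.1 then 1 else 0

/-- Squared Frobenius norm of a matrix. -/
noncomputable def frobSq {ι κ : Type*} [Fintype ι] [Fintype κ]
    (M : Matrix ι κ ℝ) : ℝ := ∑ i, ∑ j, (M i j) ^ 2

/-- Misclassification proportion between two `p`-tuples of permutations,
minimized over a global relabeling. -/
noncomputable def errPerm {n p : ℕ} (π π' : Fin p → Equiv.Perm (Fin n)) : ℝ :=
  ⨅ ψ : Equiv.Perm (Fin n),
    (1 / ((n : ℝ) * p)) * ∑ j : Fin p,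
      ((Finset.univ.filter (fun u : Fin n => ψ (π j u) ≠ π' j u)).card : ℝ)


/-!
Let `T` be the number of ordered pairs of nodes aligned by both `π` and `π'`. Expanding the
square of the 0/1 entries gives `‖M^π - M^π'‖_F² = 2np² - 2T`, so the right-hand side equals
`T / (np²)`. For an optimal relabeling `ψ`, sort the correctly labeled nodes by their
`π`-label `v`: by Cauchy–Schwarz over the `n` labels, `(#correct)² ≤ n · Σ_v (#correct with
label v)²`, and two correct nodes with the same `π`-label share their `π'`-label as well, so
the last sum is at most `T`. Dividing by `(np)²` gives the claim.
-/

namespace Alignment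

section Labelings

variable {X V W : Type*} [Fintype X] [DecidableEq X] [DecidableEq V] [DecidableEq W]

def alignMatrix (σ : X → V) : Matrix X X ℝ := fun x y => if σ x = σ y then 1 else 0

def sameLabel (σ : X → V) : Finset (X × X) := {q | σ q.1 = σ q.2}

omit [DecidableEq X] [DecidableEq V] in
lemma sum_sum_ite_eq_card_filter (P : X → X → Prop) [DecidableRel P] :
    ∑ x, ∑ y, (if P x y then (1 : ℝ) else 0) = #{q : X × X | P q.1 q.2} := by
  rw [← Fintype.sum_prod_type', sum_boole]

lemma frobSq_alignMatrix_sub (σ : X → V) (τ : X → W) :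
    frobSq (alignMatrix σ - alignMatrix τ) =
      #(sameLabel σ) + #(sameLabel τ) - 2 * #(sameLabel σ ∩ sameLabel τ) := by
  have hentry : ∀ x y, (alignMatrix σ - alignMatrix τ) x y ^ 2 =
      (if σ x = σ y then 1 else 0) + (if τ x = τ y then 1 else 0) -
        2 * (if σ x = σ y ∧ τ x = τ y then 1 else 0) := by
    intro x y
    simp only [Matrix.sub_apply, alignMatrix]
    split_ifs <;> grind
  simp only [frobSq, hentry, sum_add_distrib, sum_sub_distrib, ← mul_sum,
    sum_sum_ite_eq_card_filter, sameLabel, filter_and]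

omit [DecidableEq X] in
lemma card_sameLabel_of_card_fiber (σ : X → V) {k : ℕ} (hk : ∀ v, #{x | σ x = v} = k) :
    #(sameLabel σ) = Fintype.card X * k := by
  have hrow : ∀ x, #{y | σ x = σ y} = k := fun x => by
    rw [← hk (σ x), filter_congr fun y _ => eq_comm]
  rw [sameLabel, card_filter, Fintype.sum_prod_type]
  simp only [← card_filter, hrow, sum_const, card_univ, smul_eq_mul]

lemma sq_card_agree_le_card_mul_card_sameLabel_inter [Fintype V]
    (σ : X → V) (τ : X → W) (ψ : V → W) :
    #{x | ψ (σ x) = τ x} ^ 2 ≤ Fintype.card V * #(sameLabel σ ∩ sameLabel τ) := by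
  set G : Finset X := {x | ψ (σ x) = τ x}
  set F : Finset (X × X) := {q ∈ G ×ˢ G | σ q.1 = σ q.2}
  have hG : #G = ∑ v, #{x ∈ G | σ x = v} :=
    card_eq_sum_card_fiberwise fun x _ => mem_univ (σ x)
  have hF : #F = ∑ v, #{x ∈ G | σ x = v} ^ 2 := by
    rw [card_eq_sum_card_fiberwise fun q _ => mem_univ (σ q.1)]
    refine sum_congr rfl fun v _ => ?_
    rw [sq, ← card_product]
    congr 1
    ext ⟨x, y⟩
    simp only [F, mem_filter, mem_product]
    constructor
    · rintro ⟨⟨⟨hx, hy⟩, hxy⟩, rfl⟩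
      exact ⟨⟨hx, rfl⟩, hy, hxy.symm⟩
    · rintro ⟨⟨hx, rfl⟩, hy, hyx⟩
      exact ⟨⟨⟨hx, hy⟩, hyx.symm⟩, rfl⟩
  have hFsub : F ⊆ sameLabel σ ∩ sameLabel τ := by
    rintro ⟨x, y⟩ hq
    simp only [F, G, mem_filter, mem_product, mem_univ, true_and] at hq
    obtain ⟨⟨hx, hy⟩, hxy⟩ := hq
    simp only [sameLabel, mem_inter, mem_filter, mem_univ, true_and]
    exact ⟨hxy, by rw [← hx, ← hy, hxy]⟩
  calc #G ^ 2 = (∑ v, #{x ∈ G | σ x = v}) ^ 2 := by rw [hG]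
    _ ≤ Fintype.card V * ∑ v, #{x ∈ G | σ x = v} ^ 2 := sq_sum_le_card_mul_sum_sq
    _ ≤ Fintype.card V * #(sameLabel σ ∩ sameLabel τ) := by
      rw [← hF]
      exact Nat.mul_le_mul_left _ (card_le_card hFsub)

end Labelings

section Permutations

variable {n p : ℕ}

def labeling (π : Fin p → Equiv.Perm (Fin n)) : Fin n × Fin p → Fin n := fun x => π x.2 x.1

lemma Mmat_eq_alignMatrix (π : Fin p → Equiv.Perm (Fin n)) :
    Mmat π = alignMatrix (labeling π) :=
  rfl

lemma card_filter_labeling_eq (π : Fin p → Equiv.Perm (Fin n)) (v : Fin n) :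
    #{x | labeling π x = v} = p := by
  rw [card_filter, Fintype.sum_prod_type_right]
  simp [labeling, ← Equiv.eq_symm_apply]

lemma card_sameLabel_labeling (π : Fin p → Equiv.Perm (Fin n)) :
    #(sameLabel (labeling π)) = n * p ^ 2 := by
  rw [card_sameLabel_of_card_fiber _ (card_filter_labeling_eq π)]
  simp [sq, mul_assoc]

lemma exists_one_sub_errPerm_eq (hn : 0 < n) (hp : 0 < p) (π π' : Fin p → Equiv.Perm (Fin n)) :
    ∃ ψ : Equiv.Perm (Fin n),
      1 - errPerm π π' = #{x | ψ (labeling π x) = labeling π' x} / ((n : ℝ) * p) := by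
  obtain ⟨ψ, hψ⟩ := exists_eq_ciInf_of_finite (f := fun ψ : Equiv.Perm (Fin n) =>
    (1 / ((n : ℝ) * p)) * ∑ j : Fin p, (#{u : Fin n | ψ (π j u) ≠ π' j u} : ℝ))
  refine ⟨ψ, ?_⟩
  have hsplit : (#{x | ψ (labeling π x) = labeling π' x} : ℝ) +
      #{x | ψ (labeling π x) ≠ labeling π' x} = n * p := by
    exact_mod_cast (card_filter_add_card_filter_not (s := univ) _).trans (by simp)
  have hmiss : ∑ j : Fin p, (#{u : Fin n | ψ (π j u) ≠ π' j u} : ℝ) =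
      #{x | ψ (labeling π x) ≠ labeling π' x} := by
    rw [← sum_boole, Fintype.sum_prod_type_right]
    simp only [← sum_boole, labeling]
    congr!
  have hnp : (n : ℝ) * p ≠ 0 := by positivity
  rw [errPerm, ← hψ, hmiss, eq_sub_of_add_eq' hsplit]
  field_simp
  ring

end Permutations

end Alignment

open Alignment

theorem err_vs_alignment_matrix_distance
    (n p : ℕ) (hn : 0 < n) (hp : 0 < p)
    (π π' : Fin p → Equiv.Perm (Fin n)) :
    (1 - errPerm π π') ^ 2 ≤
      1 - frobSq (Mmat π - Mmat π') / (2 * n * (p : ℝ) ^ 2) := by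
  obtain ⟨ψ, hψ⟩ := exists_one_sub_errPerm_eq hn hp π π'
  set a := #{x | ψ (labeling π x) = labeling π' x}
  set T := #(sameLabel (labeling π) ∩ sameLabel (labeling π'))
  have hkey : (a : ℝ) ^ 2 ≤ n * T := by
    have := sq_card_agree_le_card_mul_card_sameLabel_inter (labeling π) (labeling π') ψ
    rw [Fintype.card_fin] at this
    exact_mod_cast this
  have hrhs : 1 - frobSq (Mmat π - Mmat π') / (2 * n * (p : ℝ) ^ 2) = T / (n * p ^ 2) := by
    rw [Mmat_eq_alignMatrix, Mmat_eq_alignMatrix, frobSq_alignMatrix_sub,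
      card_sameLabel_labeling, card_sameLabel_labeling]
    field_simp
    push_cast
    ring
  rw [hψ, hrhs, div_pow, div_le_div_iff₀ (by positivity) (by positivity)]
  calc (a : ℝ) ^ 2 * (n * p ^ 2) ≤ (n * T) * (n * p ^ 2) := by gcongr
    _ = (T : ℝ) * (n * p) ^ 2 := by ring
end
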